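/- Let Δ_{i−1} be a partially-canonical drawing of T[i−1], let v_i be the i-th internal node labeled visited in the bottom-up visit of T, and let Δ_i be the drawing of T obtained from Δ_{i−1} by redrawing the subtree T_{v_i} — keeping v_i and every node not in T_{v_i} fixed — as an upward canonical drawing if v_i is the root or y(v_i) ≤ y(p(v_i)) in Δ_{i−1}, and as a downward canonical drawing otherwise. Then Δ_i is a partially-canonical drawing of T[i]. -/

import Mathlib

open Real Set

/-- A finite rooted ordered tree: a root, a parent function (fixing the root),
well-foundedness (every node reaches the root by iterating `parent`), and a
rank function giving the left-to-right order among siblings. -/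
structure OTree (V : Type) [Fintype V] [DecidableEq V] where
  root : V
  parent : V → V
  parent_root : parent root = root
  reach : ∀ v : V, ∃ n : ℕ, parent^[n] v = root
  rank : V → ℕ
  rank_inj : ∀ u v : V, u ≠ root → v ≠ root →
    parent u = parent v → rank u = rank v → u = v

variable {V : Type} [Fintype V] [DecidableEq V]

/-- `c` is a child of `v`. -/
def OTree.IsChild (T : OTree V) (c v : V) : Prop := c ≠ T.root ∧ T.parent c = v

/-- A leaf is a node with no children. -/
def OTree.IsLeaf (T : OTree V) (v : V) : Prop := ∀ c, ¬ T.IsChild c v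

/-- `a` is an ancestor of `w`, or `a = w`. -/
def OTree.AncEq (T : OTree V) (a w : V) : Prop := ∃ n : ℕ, T.parent^[n] w = a

/-- A drawing is strictly upward if every non-root node lies strictly below its parent. -/
def IsUpwardD (T : OTree V) (Γ : V → ℝ × ℝ) : Prop :=
  ∀ v, v ≠ T.root → (Γ v).2 < (Γ (T.parent v)).2

/-- A straight-line drawing is planar if it is injective on nodes and any two distinct
edge segments meet only in (images of) shared endpoints. -/
def IsPlanarD (T : OTree V) (Γ : V → ℝ × ℝ) : Prop :=
  Function.Injective Γ ∧
  ∀ u v : V, u ≠ T.root → v ≠ T.root → u ≠ v →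
    segment ℝ (Γ u) (Γ (T.parent u)) ∩ segment ℝ (Γ v) (Γ (T.parent v)) ⊆
      Γ '' (({u, T.parent u} : Set V) ∩ {v, T.parent v})

/-- The angle of the direction from `p` to `q`. -/
noncomputable def dirAngle (p q : ℝ × ℝ) : ℝ :=
  Complex.arg (Complex.ofReal (q.1 - p.1) + Complex.ofReal (q.2 - p.2) * Complex.I)

/-- Normalization of an angle into the window `[a, a + 2π)`. -/
noncomputable def normAngle (a θ : ℝ) : ℝ := θ - 2 * π * (⌊(θ - a) / (2 * π)⌋ : ℤ)

/-- The angle of the direction from `Γ v` to `Γ w`, normalized into `[a, a + 2π)`. -/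
noncomputable def angFrom (Γ : V → ℝ × ℝ) (a : ℝ) (v w : V) : ℝ :=
  normAngle a (dirAngle (Γ v) (Γ w))

/-- A drawing is order-preserving if around every node the counterclockwise cyclic
order of the incident edges is: edge to the parent, then edges to the children in
left-to-right order. -/
def IsOrderPreservingD (T : OTree V) (Γ : V → ℝ × ℝ) : Prop :=
  ∀ v : V, ∃ a : ℝ,
    (∀ c₁ c₂ : V, T.IsChild c₁ v → T.IsChild c₂ v → T.rank c₁ < T.rank c₂ →
      angFrom Γ a v c₁ < angFrom Γ a v c₂) ∧
    (v ≠ T.root → ∀ c : V, T.IsChild c v →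
      angFrom Γ a v (T.parent v) < angFrom Γ a v c)

/-- A grid drawing places every node at integer coordinates. -/
def IsGridD (Γ : V → ℝ × ℝ) : Prop :=
  ∀ v, (∃ a : ℤ, (Γ v).1 = a) ∧ (∃ b : ℤ, (Γ v).2 = b)

/-- The width of a (grid) drawing: number of grid columns met by its bounding box. -/
noncomputable def gW (Γ : V → ℝ × ℝ) : ℝ :=
  sSup (Set.range fun v => (Γ v).1) - sInf (Set.range fun v => (Γ v).1) + 1

/-- The height of a (grid) drawing: number of grid rows met by its bounding box. -/
noncomputable def gH (Γ : V → ℝ × ℝ) : ℝ :=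
  sSup (Set.range fun v => (Γ v).2) - sInf (Set.range fun v => (Γ v).2) + 1

/-- The drawing at time `t` of the linear morph from `Γ₀` to `Γ₁`. -/
def lerpD (t : ℝ) (Γ₀ Γ₁ : V → ℝ × ℝ) : V → ℝ × ℝ :=
  fun v => (1 - t) • Γ₀ v + t • Γ₁ v

/-- The linear morph from `Γ₀` to `Γ₁` is planar. -/
def PlanarStep (T : OTree V) (Γ₀ Γ₁ : V → ℝ × ℝ) : Prop :=
  ∀ t ∈ Set.Icc (0:ℝ) 1, IsPlanarD T (lerpD t Γ₀ Γ₁)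

/-- The linear morph from `Γ₀` to `Γ₁` is upward. -/
def UpwardStep (T : OTree V) (Γ₀ Γ₁ : V → ℝ × ℝ) : Prop :=
  ∀ t ∈ Set.Icc (0:ℝ) 1, IsUpwardD T (lerpD t Γ₀ Γ₁)

/-- `w` strictly precedes `v` in the pre-order traversal of `T`: either `w` is a proper
ancestor of `v`, or there are siblings `a, b` with `rank a < rank b` such that `a` is an
ancestor (or equal) of `w` and `b` is an ancestor (or equal) of `v`. -/
def preLT (T : OTree V) (w v : V) : Prop :=
  (w ≠ v ∧ T.AncEq w v) ∨
  ∃ a b : V, a ≠ T.root ∧ b ≠ T.root ∧ T.parent a = T.parent b ∧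
    T.rank a < T.rank b ∧ T.AncEq a w ∧ T.AncEq b v

/-- The depth of a node: the least number of `parent` steps reaching the root. -/
noncomputable def depthT (T : OTree V) (v : V) : ℕ := Nat.find (T.reach v)

/-- The pre-order index of `w` within the subtree rooted at `u`. -/
noncomputable def relIdx (T : OTree V) (u w : V) : ℕ :=
  Nat.card {w' : V // T.AncEq u w' ∧ preLT T w' w}

/-- The drawing of the subtree rooted at `u` is an upward canonical drawing: for some
grid point `(x₀, y₀)` (the position of `u`), every node `w` of the subtree is placed
at `x₀ +` (pre-order index of `w` in the subtree) and `y₀ -` (depth of `w` below `u`). -/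
def UpCanonicalOn (T : OTree V) (u : V) (Γ : V → ℝ × ℝ) : Prop :=
  ∃ x₀ y₀ : ℤ, ∀ w, T.AncEq u w →
    Γ w = (((x₀ + (relIdx T u w : ℤ) : ℤ) : ℝ),
           ((y₀ - ((depthT T w : ℤ) - (depthT T u : ℤ)) : ℤ) : ℝ))

/-- Counterclockwise rotation of the plane by `π/2` about the origin. -/
def rotCCW (p : ℝ × ℝ) : ℝ × ℝ := (-p.2, p.1)

/-- The drawing of the subtree rooted at `u` is a downward canonical drawing:
an upward canonical drawing rotated by `π` (i.e. by `π/2` twice). -/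
def DownCanonicalOn (T : OTree V) (u : V) (Γ : V → ℝ × ℝ) : Prop :=
  ∃ Γ' : V → ℝ × ℝ, UpCanonicalOn T u Γ' ∧
    ∀ w, T.AncEq u w → Γ w = rotCCW (rotCCW (Γ' w))

/-- An upward canonical drawing of the whole tree. -/
def IsUpCanonical (T : OTree V) (Γ : V → ℝ × ℝ) : Prop := UpCanonicalOn T T.root Γ

/-- A leftward canonical drawing: an upward canonical drawing rotated
counterclockwise by `π/2`. -/
def IsLeftCanonical (T : OTree V) (Γ : V → ℝ × ℝ) : Prop :=
  ∃ Γ', IsUpCanonical T Γ' ∧ ∀ v, Γ v = rotCCW (Γ' v)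

/-- A downward canonical drawing: an upward canonical drawing rotated by `π`. -/
def IsDownCanonical (T : OTree V) (Γ : V → ℝ × ℝ) : Prop :=
  ∃ Γ', IsUpCanonical T Γ' ∧ ∀ v, Γ v = rotCCW (rotCCW (Γ' v))

/-- A rightward canonical drawing: an upward canonical drawing rotated
counterclockwise by `3π/2`. -/
def IsRightCanonical (T : OTree V) (Γ : V → ℝ × ℝ) : Prop :=
  ∃ Γ', IsUpCanonical T Γ' ∧ ∀ v, Γ v = rotCCW (rotCCW (rotCCW (Γ' v)))

/-- A canonical drawing: upward, leftward, downward or rightward canonical. -/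
def IsCanonical (T : OTree V) (Γ : V → ℝ × ℝ) : Prop :=
  IsUpCanonical T Γ ∨ IsLeftCanonical T Γ ∨ IsDownCanonical T Γ ∨ IsRightCanonical T Γ

/-- The `ℓ`-box centered at the point `c`: the axis-parallel square of side `ℓ`
with corners `c ± (ℓ/2, ℓ/2)`. -/
def boxAt (ℓ : ℝ) (c : ℝ × ℝ) : Set (ℝ × ℝ) :=
  {p | |p.1 - c.1| ≤ ℓ / 2 ∧ |p.2 - c.2| ≤ ℓ / 2}

/-- `S` is a (filled) sector of a circumference centered at `c`: for some radius
`ρ > 0` and angles `θ₁ ≤ θ₂ ≤ θ₁ + 2π`, `S` is the set of points `c + r·(cos θ, sin θ)`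
with `0 ≤ r ≤ ρ` and `θ₁ ≤ θ ≤ θ₂`. -/
def IsSector (c : ℝ × ℝ) (S : Set (ℝ × ℝ)) : Prop :=
  ∃ ρ θ₁ θ₂ : ℝ, 0 < ρ ∧ θ₁ ≤ θ₂ ∧ θ₂ ≤ θ₁ + 2 * π ∧
    S = {p | ∃ r θ : ℝ, 0 ≤ r ∧ r ≤ ρ ∧ θ₁ ≤ θ ∧ θ ≤ θ₂ ∧
      p = (c.1 + r * Real.cos θ, c.2 + r * Real.sin θ)}

/-- `Γ` is a partially-canonical drawing of `T` with respect to the labeling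
`visited` (Definition 2 of the paper, with `n` the number of nodes and `ℓ₀` the
parameter `150·D₀²·n`): an order-preserving straight-line planar grid drawing such
that
(a) the subtree of each visited node is drawn upward or downward canonically
    (upward when the node does not lie above its parent, downward otherwise);
(b) each edge `e = (v, u)` from an unvisited node `v` to a child `u` has a sector
    `S u` of a circumference centered at `v` such that (b.i) `S u` encloses the
    `2n`-box of `u`; (b.ii) `S u` contains no node except `v` and nodes of `T_u` and
    meets no edge except `e` and edges of `T_u` (other edges may touch `S u` only at
    `v`); (b.iii) `S u ∩ B_{ℓ₀}(v)` contains a `2n`-box with integer corner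
    coordinates whose center is weakly below `v` iff `u` is; (b.iv) the sectors of
    distinct edges out of `v` have disjoint interiors;
(c) the `(ℓ₀+4n)`-boxes of distinct unvisited nodes are disjoint;
(d) the `(ℓ₀+4n)`-box of an unvisited node `v` contains no node other than `v`, and
    every edge or sector meeting it belongs to an edge incident to `v`. -/
def PartiallyCanonical (T : OTree V) (visited : V → Prop) (ℓ₀ : ℝ)
    (Γ : V → ℝ × ℝ) : Prop :=
  IsOrderPreservingD T Γ ∧ IsPlanarD T Γ ∧ IsGridD Γ ∧
  -- (a)
  (∀ u, visited u →
    (UpCanonicalOn T u Γ ∨ DownCanonicalOn T u Γ) ∧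
    (u ≠ T.root →
      ((Γ u).2 ≤ (Γ (T.parent u)).2 → UpCanonicalOn T u Γ) ∧
      ((Γ (T.parent u)).2 < (Γ u).2 → DownCanonicalOn T u Γ))) ∧
  -- (b)
  (∃ S : V → Set (ℝ × ℝ),
    (∀ u, u ≠ T.root → ¬ visited (T.parent u) →
      IsSector (Γ (T.parent u)) (S u) ∧
      boxAt (2 * (Fintype.card V : ℝ)) (Γ u) ⊆ S u ∧
      (∀ w, Γ w ∈ S u → w = T.parent u ∨ T.AncEq u w) ∧
      (∀ w, w ≠ T.root → ¬ T.AncEq u w →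
        segment ℝ (Γ w) (Γ (T.parent w)) ∩ S u ⊆ {Γ (T.parent u)}) ∧
      (∃ cu : ℤ × ℤ,
        boxAt (2 * (Fintype.card V : ℝ)) ((cu.1 : ℝ), (cu.2 : ℝ)) ⊆
          S u ∩ boxAt ℓ₀ (Γ (T.parent u)) ∧
        ((cu.2 : ℝ) ≤ (Γ (T.parent u)).2 ↔ (Γ u).2 ≤ (Γ (T.parent u)).2))) ∧
    (∀ u u', u ≠ T.root → u' ≠ T.root → ¬ visited (T.parent u) →
      T.parent u = T.parent u' → u ≠ u' →
      interior (S u) ∩ interior (S u') = ∅) ∧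
    (∀ v, ¬ visited v → ∀ u, u ≠ T.root → ¬ visited (T.parent u) →
      (S u ∩ boxAt (ℓ₀ + 4 * (Fintype.card V : ℝ)) (Γ v)).Nonempty →
      T.parent u = v ∨ u = v)) ∧
  -- (c)
  (∀ v w, ¬ visited v → ¬ visited w → v ≠ w →
    boxAt (ℓ₀ + 4 * (Fintype.card V : ℝ)) (Γ v) ∩
      boxAt (ℓ₀ + 4 * (Fintype.card V : ℝ)) (Γ w) = ∅) ∧
  -- (d)
  (∀ v, ¬ visited v →
    (∀ w, w ≠ v → Γ w ∉ boxAt (ℓ₀ + 4 * (Fintype.card V : ℝ)) (Γ v)) ∧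
    (∀ w, w ≠ T.root →
      (segment ℝ (Γ w) (Γ (T.parent w)) ∩
        boxAt (ℓ₀ + 4 * (Fintype.card V : ℝ)) (Γ v)).Nonempty →
      T.parent w = v ∨ w = v))

/-!
The redrawn subtree `T_vi` is a canonical drawing of at most `n` nodes around the fixed
node `vi`, so it lies in the `2n`-box of `vi`, well inside the `(ℓ₀ + 4n)`-box of `vi`.
By conditions (c) and (d) for `Δ_{i-1}`, no node, edge or sector other than those at `vi`
reaches that box, so every condition that concerns anything outside `T_vi` is inherited
from `Δ_{i-1}`. Inside `T_vi` the canonical drawing is a grid drawing with canonical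
subtrees; it is planar because its edges join consecutive depth levels and, within a level,
are ordered by pre-order index; and it is order-preserving and meets the edge from `vi` to
its parent only at `vi`, because the children of every node lie on the far side of the
horizontal line through it.
-/

namespace OTree

variable {T : OTree V}

lemma iterate_parent_root (n : ℕ) : T.parent^[n] T.root = T.root :=
  Function.iterate_fixed T.parent_root n

lemma eq_root_of_isPeriodicPt {x : V} {k : ℕ} (hk : k ≠ 0)
    (h : Function.IsPeriodicPt T.parent k x) : x = T.root := by
  obtain ⟨m, hm⟩ := T.reach x
  have hle : m ≤ m * k := Nat.le_mul_of_pos_right m (Nat.pos_of_ne_zero hk)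
  calc x = T.parent^[m * k] x := ((h.const_mul m).eq).symm
    _ = T.parent^[m * k - m] (T.parent^[m] x) := by
      rw [← Function.iterate_add_apply, Nat.sub_add_cancel hle]
    _ = T.root := by rw [hm, iterate_parent_root]

lemma AncEq.refl (w : V) : T.AncEq w w := ⟨0, rfl⟩

lemma AncEq.trans {a b c : V} (h₁ : T.AncEq a b) (h₂ : T.AncEq b c) : T.AncEq a c := by
  obtain ⟨n, rfl⟩ := h₁
  obtain ⟨m, rfl⟩ := h₂
  exact ⟨n + m, Function.iterate_add_apply _ _ _ _⟩

lemma AncEq.antisymm {a b : V} (h₁ : T.AncEq a b) (h₂ : T.AncEq b a) : a = b := by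
  obtain ⟨n, hn⟩ := h₁
  obtain ⟨m, hm⟩ := h₂
  rcases Nat.eq_zero_or_pos (m + n) with h | h
  · rw [← hn, (Nat.add_eq_zero_iff.mp h).2, Function.iterate_zero_apply]
  · have hb : b = T.root := eq_root_of_isPeriodicPt h.ne' <| by
      rw [Function.IsPeriodicPt, Function.IsFixedPt, Function.iterate_add_apply, hn, hm]
    rw [← hn, hb, iterate_parent_root]

lemma root_ancEq (w : V) : T.AncEq T.root w := T.reach w

lemma parent_ancEq (w : V) : T.AncEq (T.parent w) w := ⟨1, rfl⟩

lemma AncEq.parent_right {a w : V} (h : T.AncEq a w) (hne : a ≠ w) :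
    T.AncEq a (T.parent w) := by
  obtain ⟨_ | n, hn⟩ := h
  · exact absurd hn.symm hne
  · exact ⟨n, hn⟩

lemma AncEq.total {a b w : V} (ha : T.AncEq a w) (hb : T.AncEq b w) :
    T.AncEq a b ∨ T.AncEq b a := by
  obtain ⟨n, rfl⟩ := ha
  obtain ⟨m, rfl⟩ := hb
  rcases le_total n m with h | h
  · exact Or.inr ⟨m - n, by rw [← Function.iterate_add_apply, Nat.sub_add_cancel h]⟩
  · exact Or.inl ⟨n - m, by rw [← Function.iterate_add_apply, Nat.sub_add_cancel h]⟩

lemma not_ancEq_parent {a : V} (ha : a ≠ T.root) : ¬ T.AncEq a (T.parent a) := fun h =>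
  ha <| eq_root_of_isPeriodicPt (k := 1) one_ne_zero (h.antisymm (parent_ancEq a)).symm

lemma AncEq.ne_root {a w : V} (h : T.AncEq a w) (hne : w ≠ a) : w ≠ T.root := by
  rintro rfl
  exact hne (h.antisymm (root_ancEq a)).symm

lemma AncEq.exists_child {a w : V} (h : T.AncEq a w) (hne : a ≠ w) :
    ∃ c, T.IsChild c a ∧ T.AncEq c w := by
  obtain ⟨n, hn⟩ := h
  induction n generalizing w with
  | zero => exact absurd hn.symm hne
  | succ n ih =>
    by_cases hpw : T.parent w = a
    · exact ⟨w, ⟨AncEq.ne_root (T := T) ⟨n + 1, hn⟩ hne.symm, hpw⟩, AncEq.refl w⟩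
    · obtain ⟨c, hc, hcw⟩ := ih (Ne.symm hpw) hn
      exact ⟨c, hc, hcw.trans (parent_ancEq w)⟩

lemma AncEq.of_sibling {x a b : V} (h : T.AncEq x a) (hne : x ≠ a)
    (hp : T.parent a = T.parent b) : T.AncEq x b :=
  (hp ▸ h.parent_right hne).trans (parent_ancEq b)

lemma AncEq.eq_of_parent_eq {a b : V} (h : T.AncEq a b) (ha : a ≠ T.root)
    (hp : T.parent a = T.parent b) : a = b := by
  by_contra hne
  exact not_ancEq_parent ha (hp ▸ h.parent_right hne)

lemma depthT_parent {v : V} (hv : v ≠ T.root) :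
    depthT T v = depthT T (T.parent v) + 1 :=
  Nat.find_comp_succ (T.reach v) (T.reach (T.parent v)) (by simpa using hv)

lemma depthT_iterate {w : V} {n : ℕ} (h : T.parent^[n] w ≠ T.root) :
    depthT T (T.parent^[n] w) + n = depthT T w := by
  induction n generalizing w with
  | zero => rfl
  | succ n ih =>
    have hw : w ≠ T.root := by
      rintro rfl
      exact h (iterate_parent_root _)
    rw [depthT_parent hw, ← ih h]
    rfl

lemma depthT_eq_zero {w : V} : depthT T w = 0 ↔ w = T.root := Nat.find_eq_zero _

lemma depthT_root : depthT T T.root = 0 := depthT_eq_zero.mpr rfl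

lemma AncEq.depthT_lt {a w : V} (h : T.AncEq a w) (hne : a ≠ w) :
    depthT T a < depthT T w := by
  by_cases ha : a = T.root
  · subst ha
    rw [depthT_root, Nat.pos_iff_ne_zero, Ne, depthT_eq_zero]
    exact fun hw => hne hw.symm
  · obtain ⟨_ | n, rfl⟩ := h
    · exact absurd rfl hne
    · have := depthT_iterate ha
      omega

lemma AncEq.depthT_le {a w : V} (h : T.AncEq a w) : depthT T a ≤ depthT T w := by
  rcases eq_or_ne a w with rfl | hne
  · exact le_rfl
  · exact (h.depthT_lt hne).le

lemma depthT_lt_card (v : V) : depthT T v < Fintype.card V := by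
  have hdepth : ∀ i : Fin (depthT T v + 1), depthT T (T.parent^[i] v) = depthT T v - i := by
    intro i
    by_cases hr : T.parent^[i] v = T.root
    · have : depthT T v ≤ i := Nat.find_min' _ hr
      rw [hr, depthT_root]
      omega
    · have := depthT_iterate hr
      omega
  have hinj : Function.Injective fun i : Fin (depthT T v + 1) => T.parent^[i] v := by
    intro i j hij
    have := congrArg (depthT T) hij
    simp only [hdepth] at this
    omega
  simpa using Fintype.card_le_of_injective _ hinj

lemma visited_of_ancEq {visited : V → Prop}
    (hclosed : ∀ v c, visited v → T.IsChild c v → visited c)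
    {x w : V} (h : T.AncEq x w) (hx : visited x) : visited w := by
  obtain ⟨n, hn⟩ := h
  induction n generalizing w with
  | zero =>
    obtain rfl : w = x := hn
    exact hx
  | succ n ih =>
    by_cases hw : w = T.root
    · subst hw
      exact ih (by rwa [Function.iterate_succ_apply, T.parent_root] at hn)
    · exact hclosed _ w (ih hn) ⟨hw, rfl⟩

lemma visited_of_ancEq_of_ne {visited : V → Prop}
    (hclosed : ∀ v c, visited v → T.IsChild c v → visited c)
    {vi w : V} (hchildren : ∀ c, T.IsChild c vi → visited c) (h : T.AncEq vi w)
    (hne : w ≠ vi) : visited w :=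
  let ⟨c, hc, hcw⟩ := h.exists_child hne.symm
  visited_of_ancEq hclosed hcw (hchildren c hc)

end OTree

open OTree

section PreOrder

variable {T : OTree V}

lemma preLT_of_ancEq {u w : V} (h : T.AncEq u w) (hne : u ≠ w) : preLT T u w :=
  Or.inl ⟨hne, h⟩

lemma preLT_of_sibling_ancEq {a b u w : V} (ha : a ≠ T.root) (hb : b ≠ T.root)
    (hp : T.parent a = T.parent b) (hr : T.rank a < T.rank b)
    (hau : T.AncEq a u) (hbw : T.AncEq b w) : preLT T u w :=
  Or.inr ⟨a, b, ha, hb, hp, hr, hau, hbw⟩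

lemma preLT_irrefl (w : V) : ¬ preLT T w w := by
  rintro (⟨hne, -⟩ | ⟨a, b, ha, hb, hp, hr, haw, hbw⟩)
  · exact hne rfl
  · rcases haw.total hbw with h | h
    · exact hr.ne (congrArg T.rank (h.eq_of_parent_eq ha hp))
    · exact hr.ne (congrArg T.rank (h.eq_of_parent_eq hb hp.symm)).symm

lemma preLT.trans_ancEq {u v w : V} (h : preLT T u v) (hvw : T.AncEq v w) : preLT T u w := by
  rcases h with ⟨hne, huv⟩ | ⟨a, b, ha, hb, hp, hr, hau, hbv⟩
  · refine preLT_of_ancEq (huv.trans hvw) fun huw => hne ?_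
    subst huw
    exact huv.antisymm hvw
  · exact preLT_of_sibling_ancEq ha hb hp hr hau (hbv.trans hvw)

lemma preLT.ancEq_trans {a u w : V} (h : preLT T a w) (hau : T.AncEq a u)
    (hnot : ¬ T.AncEq a w) : preLT T u w := by
  rcases h with ⟨-, haw⟩ | ⟨a', b, ha', hb, hp, hr, ha'a, hbw⟩
  · exact absurd haw hnot
  · exact preLT_of_sibling_ancEq ha' hb hp hr (ha'a.trans hau) hbw

lemma preLT_trans {u v w : V} (h₁ : preLT T u v) (h₂ : preLT T v w) : preLT T u w := by
  rcases h₂ with ⟨-, hvw⟩ | ⟨a₂, b₂, ha₂, hb₂, hp₂, hr₂, ha₂v, hb₂w⟩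
  · exact h₁.trans_ancEq hvw
  rcases h₁ with ⟨-, huv⟩ | ⟨a, b, ha, hb, hp, hr, hau, hbv⟩
  · rcases huv.total ha₂v with hua₂ | ha₂u
    · by_cases h : u = a₂
      · exact preLT_of_sibling_ancEq ha₂ hb₂ hp₂ hr₂ (h ▸ AncEq.refl u) hb₂w
      · have hub₂ := hua₂.of_sibling h hp₂
        refine (preLT_of_ancEq hub₂ ?_).trans_ancEq hb₂w
        rintro rfl
        exact not_ancEq_parent hb₂ (hp₂ ▸ hua₂.parent_right h)
    · exact preLT_of_sibling_ancEq ha₂ hb₂ hp₂ hr₂ ha₂u hb₂w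
  · rcases eq_or_ne b a₂ with rfl | hne
    · exact preLT_of_sibling_ancEq ha hb₂ (hp.trans hp₂) (hr.trans hr₂) hau hb₂w
    rcases hbv.total ha₂v with hba₂ | ha₂b
    · exact preLT_of_sibling_ancEq ha hb hp hr hau ((hba₂.of_sibling hne hp₂).trans hb₂w)
    · exact preLT_of_sibling_ancEq ha₂ hb₂ hp₂ hr₂
        ((ha₂b.of_sibling hne.symm hp.symm).trans hau) hb₂w

lemma not_preLT_of_ancEq {u w : V} (h : T.AncEq u w) : ¬ preLT T w u := fun hwu => by
  rcases eq_or_ne u w with rfl | hne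
  · exact preLT_irrefl u hwu
  · exact preLT_irrefl w (preLT_trans hwu (preLT_of_ancEq h hne))

lemma preLT_or_preLT {u w : V} (hne : u ≠ w) : preLT T u w ∨ preLT T w u := by
  by_cases huw : T.AncEq u w
  · exact Or.inl (preLT_of_ancEq huw hne)
  by_cases hwu : T.AncEq w u
  · exact Or.inr (preLT_of_ancEq hwu hne.symm)
  -- `a` and `b` below are the children of the lowest common ancestor on the paths to `u`, `w`
  classical
  have hex : ∃ n, T.AncEq (T.parent^[n] u) w :=
    let ⟨m, hm⟩ := T.reach u
    ⟨m, hm ▸ root_ancEq w⟩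
  obtain ⟨k, hk⟩ : ∃ k, Nat.find hex = k + 1 :=
    Nat.exists_eq_add_one_of_ne_zero fun h0 => huw (by simpa [h0] using Nat.find_spec hex)
  set a := T.parent^[k] u
  have hpa : T.AncEq (T.parent a) w := by
    have := Nat.find_spec hex
    rwa [hk, Function.iterate_succ_apply'] at this
  have haw : ¬ T.AncEq a w := Nat.find_min hex (by omega)
  have hpaw : T.parent a ≠ w := fun h => hwu (h ▸ parent_ancEq a |>.trans ⟨k, rfl⟩)
  obtain ⟨b, ⟨hb, hpb⟩, hbw⟩ := hpa.exists_child hpaw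
  have ha : a ≠ T.root := fun h => haw (h ▸ root_ancEq w)
  have hab : a ≠ b := fun h => haw (h ▸ hbw)
  rcases lt_trichotomy (T.rank a) (T.rank b) with hr | hr | hr
  · exact Or.inl (preLT_of_sibling_ancEq ha hb hpb.symm hr ⟨k, rfl⟩ hbw)
  · exact absurd (T.rank_inj a b ha hb hpb.symm hr) hab
  · exact Or.inr (preLT_of_sibling_ancEq hb ha hpb hr hbw ⟨k, rfl⟩)

end PreOrder

section RelIdx

variable {T : OTree V}

lemma relIdx_eq_ncard (u w : V) :
    relIdx T u w = {w' | T.AncEq u w' ∧ preLT T w' w}.ncard :=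
  Nat.card_coe_set_eq _

lemma relIdx_self (u : V) : relIdx T u u = 0 := by
  rw [relIdx_eq_ncard, Set.ncard_eq_zero]
  exact Set.eq_empty_of_forall_notMem fun w' ⟨huw', hw'u⟩ => not_preLT_of_ancEq huw' hw'u

lemma relIdx_lt_relIdx {u x y : V} (hx : T.AncEq u x) (hxy : preLT T x y) :
    relIdx T u x < relIdx T u y := by
  rw [relIdx_eq_ncard, relIdx_eq_ncard]
  refine Set.ncard_lt_ncard ⟨fun w' hw' => ⟨hw'.1, preLT_trans hw'.2 hxy⟩, fun hsub => ?_⟩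
    (Set.toFinite _)
  exact preLT_irrefl x (hsub ⟨hx, hxy⟩).2

lemma relIdx_injOn (u : V) : Set.InjOn (relIdx T u) {w | T.AncEq u w} := by
  intro x hx y hy hxy
  by_contra hne
  rcases preLT_or_preLT hne with h | h
  · exact (relIdx_lt_relIdx hx h).ne hxy
  · exact (relIdx_lt_relIdx hy h).ne hxy.symm

lemma relIdx_lt_card (u w : V) : relIdx T u w < Fintype.card V := by
  rw [relIdx_eq_ncard, ← Nat.card_eq_fintype_card, ← Set.ncard_univ]
  exact Set.ncard_lt_ncard (Set.ssubset_univ_iff.mpr fun h =>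
    preLT_irrefl w (h ▸ Set.mem_univ w : w ∈ {w' | T.AncEq u w' ∧ preLT T w' w}).2)

lemma preLT_iff_of_not_ancEq {u w w' : V} (huw : T.AncEq u w) (hw' : ¬ T.AncEq u w') :
    preLT T w' w ↔ preLT T w' u := by
  refine ⟨?_, fun h => h.trans_ancEq huw⟩
  rintro (⟨hne, hw'w⟩ | ⟨a, b, ha, hb, hp, hr, haw', hbw⟩)
  · rcases hw'w.total huw with h | h
    · exact preLT_of_ancEq h fun h' => hw' (by rw [h']; exact AncEq.refl u)
    · exact absurd h hw'
  · rcases hbw.total huw with h | h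
    · exact preLT_of_sibling_ancEq ha hb hp hr haw' h
    · rcases eq_or_ne u b with rfl | hub
      · exact preLT_of_sibling_ancEq ha hb hp hr haw' (AncEq.refl u)
      · exact absurd ((h.of_sibling hub hp.symm).trans haw') hw'

lemma relIdx_add {v u w : V} (hvu : T.AncEq v u) (huw : T.AncEq u w) :
    relIdx T v w = relIdx T v u + relIdx T u w := by
  simp only [relIdx_eq_ncard]
  rw [← Set.ncard_union_eq ?disj (Set.toFinite _) (Set.toFinite _)]
  · congr 1
    ext w'
    simp only [Set.mem_ofPred_eq, Set.mem_union]
    by_cases huw' : T.AncEq u w'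
    · refine ⟨fun h => Or.inr ⟨huw', h.2⟩, ?_⟩
      rintro (⟨-, h⟩ | ⟨-, h⟩)
      · exact absurd h (not_preLT_of_ancEq huw')
      · exact ⟨hvu.trans huw', h⟩
    · simp only [huw', false_and, or_false, preLT_iff_of_not_ancEq huw huw']
  · exact Set.disjoint_left.mpr fun w' ⟨_, hw'u⟩ ⟨huw', _⟩ => not_preLT_of_ancEq huw' hw'u

end RelIdx

section Geometry

open Complex

lemma normAngle_eq_self {a θ : ℝ} (h₁ : a ≤ θ) (h₂ : θ < a + 2 * π) : normAngle a θ = θ := by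
  have : ⌊(θ - a) / (2 * π)⌋ = 0 := by
    rw [Int.floor_eq_zero_iff, Set.mem_Ico, div_lt_one two_pi_pos]
    exact ⟨div_nonneg (by linarith) two_pi_pos.le, by linarith⟩
  simp [normAngle, this]

lemma normAngle_eq_add_two_pi {a θ : ℝ} (h₁ : a - 2 * π ≤ θ) (h₂ : θ < a) :
    normAngle a θ = θ + 2 * π := by
  have : ⌊(θ - a) / (2 * π)⌋ = -1 := by
    rw [Int.floor_eq_iff, le_div_iff₀ two_pi_pos, div_lt_iff₀ two_pi_pos]
    push_cast
    constructor <;> linarith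
  simp only [normAngle, this]
  push_cast
  ring

lemma dirAngle_add_mul (p : ℝ × ℝ) (ε k : ℝ) :
    dirAngle p (p.1 + ε * k, p.2 - ε) = arg (ε * (k - I)) := by
  unfold dirAngle
  congr 1
  push_cast
  ring

lemma dirAngle_nonneg {p q : ℝ × ℝ} (h : p.2 ≤ q.2) : 0 ≤ dirAngle p q :=
  arg_nonneg_iff.mpr (by simpa using h)

lemma dirAngle_neg {p q : ℝ × ℝ} (h : q.2 < p.2) : dirAngle p q < 0 :=
  arg_neg_iff.mpr (by simpa using h)

lemma dirAngle_le_pi (p q : ℝ × ℝ) : dirAngle p q ≤ π := arg_le_pi _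

lemma neg_pi_lt_dirAngle (p q : ℝ × ℝ) : -π < dirAngle p q := neg_pi_lt_arg _

lemma arg_sub_I {k : ℝ} (hk : 0 < k) : arg (k - I) = Real.arctan (-k⁻¹) := by
  have hre : 0 < (k - I : ℂ).re := by simpa using hk
  have habs := abs_lt.mp (abs_arg_lt_pi_div_two_iff.mpr (Or.inl hre))
  rw [← Real.arctan_tan habs.1 habs.2, tan_arg]
  congr 1
  simp [div_eq_mul_inv]

lemma arg_sub_I_strictMonoOn : StrictMonoOn (fun k : ℝ => arg (k - I)) (Set.Ioi 0) := by
  intro k₁ h₁ k₂ h₂ h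
  simp only [arg_sub_I h₁, arg_sub_I h₂]
  exact Real.arctan_strictMono (neg_lt_neg (inv_strictAntiOn h₁ h₂ h))

lemma arg_sub_I_neg (k : ℝ) : arg (k - I) < 0 := arg_neg_iff.mpr (by simp)

lemma boxAt_eq_Icc (ℓ : ℝ) (c : ℝ × ℝ) :
    boxAt ℓ c = Set.Icc (c.1 - ℓ / 2, c.2 - ℓ / 2) (c.1 + ℓ / 2, c.2 + ℓ / 2) := by
  ext p
  simp only [boxAt, abs_le, Set.mem_ofPred_eq, Set.mem_Icc]
  constructor <;> rintro ⟨⟨h₁, h₂⟩, h₃, h₄⟩ <;> refine ⟨⟨?_, ?_⟩, ?_, ?_⟩ <;> linarith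

lemma convex_boxAt (ℓ : ℝ) (c : ℝ × ℝ) : Convex ℝ (boxAt ℓ c) :=
  boxAt_eq_Icc ℓ c ▸ convex_Icc _ _

lemma boxAt_mono {ℓ ℓ' : ℝ} (h : ℓ ≤ ℓ') (c : ℝ × ℝ) : boxAt ℓ c ⊆ boxAt ℓ' c :=
  fun _ ⟨h₁, h₂⟩ => ⟨h₁.trans (by linarith), h₂.trans (by linarith)⟩

lemma rotCCW_rotCCW (p : ℝ × ℝ) : rotCCW (rotCCW p) = -p := rfl

end Geometry

section Drawings

def IsGridPoint (p : ℝ × ℝ) : Prop := (∃ a : ℤ, p.1 = a) ∧ (∃ b : ℤ, p.2 = b)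

def EdgesMeetAtEnds (T : OTree V) (Γ : V → ℝ × ℝ) (u v : V) : Prop :=
  segment ℝ (Γ u) (Γ (T.parent u)) ∩ segment ℝ (Γ v) (Γ (T.parent v)) ⊆
    Γ '' (({u, T.parent u} : Set V) ∩ {v, T.parent v})

lemma EdgesMeetAtEnds.symm {T : OTree V} {Γ : V → ℝ × ℝ} {u v : V}
    (h : EdgesMeetAtEnds T Γ u v) : EdgesMeetAtEnds T Γ v u := by
  unfold EdgesMeetAtEnds at *
  rwa [Set.inter_comm, Set.inter_comm ({v, _} : Set V)]

def OrderPreservingAt (T : OTree V) (Γ : V → ℝ × ℝ) (v : V) : Prop :=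
  ∃ a : ℝ,
    (∀ c₁ c₂ : V, T.IsChild c₁ v → T.IsChild c₂ v → T.rank c₁ < T.rank c₂ →
      angFrom Γ a v c₁ < angFrom Γ a v c₂) ∧
    (v ≠ T.root → ∀ c : V, T.IsChild c v →
      angFrom Γ a v (T.parent v) < angFrom Γ a v c)

def CanonicalAt (T : OTree V) (Γ : V → ℝ × ℝ) (u : V) : Prop :=
  (UpCanonicalOn T u Γ ∨ DownCanonicalOn T u Γ) ∧
    (u ≠ T.root →
      ((Γ u).2 ≤ (Γ (T.parent u)).2 → UpCanonicalOn T u Γ) ∧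
      ((Γ (T.parent u)).2 < (Γ u).2 → DownCanonicalOn T u Γ))

def CanonicalSubtrees (T : OTree V) (visited : V → Prop) (Γ : V → ℝ × ℝ) : Prop :=
  ∀ u, visited u → CanonicalAt T Γ u

def SectorCondition (T : OTree V) (visited : V → Prop) (ℓ₀ : ℝ) (Γ : V → ℝ × ℝ) : Prop :=
  ∃ S : V → Set (ℝ × ℝ),
    (∀ u, u ≠ T.root → ¬ visited (T.parent u) →
      IsSector (Γ (T.parent u)) (S u) ∧
      boxAt (2 * (Fintype.card V : ℝ)) (Γ u) ⊆ S u ∧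
      (∀ w, Γ w ∈ S u → w = T.parent u ∨ T.AncEq u w) ∧
      (∀ w, w ≠ T.root → ¬ T.AncEq u w →
        segment ℝ (Γ w) (Γ (T.parent w)) ∩ S u ⊆ {Γ (T.parent u)}) ∧
      (∃ cu : ℤ × ℤ,
        boxAt (2 * (Fintype.card V : ℝ)) ((cu.1 : ℝ), (cu.2 : ℝ)) ⊆
          S u ∩ boxAt ℓ₀ (Γ (T.parent u)) ∧
        ((cu.2 : ℝ) ≤ (Γ (T.parent u)).2 ↔ (Γ u).2 ≤ (Γ (T.parent u)).2))) ∧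
    (∀ u u', u ≠ T.root → u' ≠ T.root → ¬ visited (T.parent u) →
      T.parent u = T.parent u' → u ≠ u' →
      interior (S u) ∩ interior (S u') = ∅) ∧
    (∀ v, ¬ visited v → ∀ u, u ≠ T.root → ¬ visited (T.parent u) →
      (S u ∩ boxAt (ℓ₀ + 4 * (Fintype.card V : ℝ)) (Γ v)).Nonempty →
      T.parent u = v ∨ u = v)

def UnvisitedBoxesDisjoint (visited : V → Prop) (ℓ₀ : ℝ) (Γ : V → ℝ × ℝ) : Prop :=
  ∀ v w, ¬ visited v → ¬ visited w → v ≠ w →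
    boxAt (ℓ₀ + 4 * (Fintype.card V : ℝ)) (Γ v) ∩
      boxAt (ℓ₀ + 4 * (Fintype.card V : ℝ)) (Γ w) = ∅

def UnvisitedBoxesClear (T : OTree V) (visited : V → Prop) (ℓ₀ : ℝ) (Γ : V → ℝ × ℝ) :
    Prop :=
  ∀ v, ¬ visited v →
    (∀ w, w ≠ v → Γ w ∉ boxAt (ℓ₀ + 4 * (Fintype.card V : ℝ)) (Γ v)) ∧
    (∀ w, w ≠ T.root →
      (segment ℝ (Γ w) (Γ (T.parent w)) ∩
        boxAt (ℓ₀ + 4 * (Fintype.card V : ℝ)) (Γ v)).Nonempty →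
      T.parent w = v ∨ w = v)

lemma partiallyCanonical_iff {T : OTree V} {visited : V → Prop} {ℓ₀ : ℝ} {Γ : V → ℝ × ℝ} :
    PartiallyCanonical T visited ℓ₀ Γ ↔ IsOrderPreservingD T Γ ∧ IsPlanarD T Γ ∧ IsGridD Γ ∧
      CanonicalSubtrees T visited Γ ∧ SectorCondition T visited ℓ₀ Γ ∧
      UnvisitedBoxesDisjoint visited ℓ₀ Γ ∧ UnvisitedBoxesClear T visited ℓ₀ Γ := Iff.rfl

end Drawings

section Congr

variable {T : OTree V} {Γ Γ' : V → ℝ × ℝ}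

lemma EdgesMeetAtEnds.congr {u v : V} (h : EdgesMeetAtEnds T Γ u v) (hu : Γ' u = Γ u)
    (hpu : Γ' (T.parent u) = Γ (T.parent u)) (hv : Γ' v = Γ v)
    (hpv : Γ' (T.parent v) = Γ (T.parent v)) : EdgesMeetAtEnds T Γ' u v := by
  unfold EdgesMeetAtEnds
  rw [hu, hpu, hv, hpv]
  refine h.trans ?_
  rintro _ ⟨x, hx, rfl⟩
  refine ⟨x, hx, ?_⟩
  rcases hx.1 with rfl | rfl
  · exact hu
  · exact hpu

lemma OrderPreservingAt.congr {v : V} (h : OrderPreservingAt T Γ v) (hv : Γ' v = Γ v)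
    (hpv : Γ' (T.parent v) = Γ (T.parent v)) (hc : ∀ c, T.IsChild c v → Γ' c = Γ c) :
    OrderPreservingAt T Γ' v := by
  have hang : ∀ a w, Γ' w = Γ w → angFrom Γ' a v w = angFrom Γ a v w := by
    intro a w hw
    simp only [angFrom, hv, hw]
  obtain ⟨a, h₁, h₂⟩ := h
  refine ⟨a, fun c₁ c₂ hc₁ hc₂ hr => ?_, fun hvr c hcv => ?_⟩
  · rw [hang a c₁ (hc c₁ hc₁), hang a c₂ (hc c₂ hc₂)]
    exact h₁ c₁ c₂ hc₁ hc₂ hr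
  · rw [hang a _ hpv, hang a c (hc c hcv)]
    exact h₂ hvr c hcv

lemma CanonicalAt.congr {u : V} (h : CanonicalAt T Γ u) (hsub : ∀ w, T.AncEq u w → Γ' w = Γ w)
    (hpu : Γ' (T.parent u) = Γ (T.parent u)) : CanonicalAt T Γ' u := by
  have hup : UpCanonicalOn T u Γ → UpCanonicalOn T u Γ' := fun ⟨x₀, y₀, hΓ⟩ =>
    ⟨x₀, y₀, fun w hw => (hsub w hw).trans (hΓ w hw)⟩
  have hdown : DownCanonicalOn T u Γ → DownCanonicalOn T u Γ' := fun ⟨Γ'', hΓ'', hΓ⟩ =>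
    ⟨Γ'', hΓ'', fun w hw => (hsub w hw).trans (hΓ w hw)⟩
  unfold CanonicalAt
  rw [hsub u (AncEq.refl u), hpu]
  exact ⟨h.1.imp hup hdown, fun hu => ⟨hup ∘ (h.2 hu).1, hdown ∘ (h.2 hu).2⟩⟩

end Congr

/-- On the subtree `T_u`, `Γ` is the upward (`ε = 1`) or downward (`ε = -1`) canonical
drawing with `u` at `Γ u`. -/
def SignedCanonicalOn (T : OTree V) (u : V) (ε : ℝ) (Γ : V → ℝ × ℝ) : Prop :=
  ∀ w, T.AncEq u w → Γ w = ((Γ u).1 + ε * relIdx T u w,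
    (Γ u).2 - ε * ((depthT T w : ℝ) - depthT T u))

/-- The side of `p` on which an upward (`ε = 1`) or downward (`ε = -1`) canonical drawing
rooted at `p` may see the parent `q` of its root. -/
def OnParentSide (ε : ℝ) (p q : ℝ × ℝ) : Prop := (ε = 1 → p.2 ≤ q.2) ∧ (ε = -1 → q.2 < p.2)

namespace SignedCanonicalOn

variable {T : OTree V} {u v : V} {ε : ℝ} {Γ : V → ℝ × ℝ}

lemma _root_.UpCanonicalOn.signedCanonicalOn (h : UpCanonicalOn T u Γ) :
    SignedCanonicalOn T u 1 Γ := by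
  obtain ⟨x₀, y₀, h⟩ := h
  intro w hw
  rw [h w hw, h u (AncEq.refl u), relIdx_self]
  push_cast
  ring_nf

lemma neg (h : SignedCanonicalOn T u ε Γ) : SignedCanonicalOn T u (-ε) (-Γ) := by
  intro w hw
  rw [Pi.neg_apply, h w hw]
  ext <;> simp only [Prod.fst_neg, Prod.snd_neg, Pi.neg_apply] <;> ring

lemma _root_.DownCanonicalOn.signedCanonicalOn (h : DownCanonicalOn T u Γ) :
    SignedCanonicalOn T u (-1) Γ := by
  obtain ⟨Γ', hup, hΓ⟩ := h
  intro w hw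
  rw [hΓ w hw, hΓ u (AncEq.refl u), rotCCW_rotCCW, rotCCW_rotCCW]
  exact hup.signedCanonicalOn.neg w hw

lemma upCanonicalOn (h : SignedCanonicalOn T u 1 Γ) (hu : IsGridPoint (Γ u)) :
    UpCanonicalOn T u Γ := by
  obtain ⟨⟨a, ha⟩, ⟨b, hb⟩⟩ := hu
  refine ⟨a, b, fun w hw => ?_⟩
  rw [h w hw, ha, hb]
  push_cast
  ring_nf

lemma downCanonicalOn (h : SignedCanonicalOn T u (-1) Γ) (hu : IsGridPoint (Γ u)) :
    DownCanonicalOn T u Γ := by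
  obtain ⟨⟨a, ha⟩, ⟨b, hb⟩⟩ := hu
  refine ⟨-Γ, ?_, fun w _ => by rw [rotCCW_rotCCW, Pi.neg_apply, neg_neg]⟩
  refine upCanonicalOn (by simpa using h.neg) ⟨⟨-a, ?_⟩, ⟨-b, ?_⟩⟩ <;> simp [ha, hb]

lemma isGridPoint (hε : ε = 1 ∨ ε = -1) (h : SignedCanonicalOn T u ε Γ)
    (hu : IsGridPoint (Γ u)) {w : V} (hw : T.AncEq u w) : IsGridPoint (Γ w) := by
  obtain ⟨⟨a, ha⟩, ⟨b, hb⟩⟩ := hu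
  rw [h w hw, ha, hb]
  rcases hε with rfl | rfl
  · exact ⟨⟨a + relIdx T u w, by push_cast; ring⟩,
      ⟨b - depthT T w + depthT T u, by push_cast; ring⟩⟩
  · exact ⟨⟨a - relIdx T u w, by push_cast; ring⟩,
      ⟨b + depthT T w - depthT T u, by push_cast; ring⟩⟩

lemma mono (h : SignedCanonicalOn T u ε Γ) {u' : V} (hu' : T.AncEq u u') :
    SignedCanonicalOn T u' ε Γ := by
  intro w hw
  rw [h w (hu'.trans hw), h u' hu', relIdx_add hu' hw]
  push_cast
  ext <;> ring

lemma parent_eq (h : SignedCanonicalOn T u ε Γ) {w : V} (hw : T.AncEq u w) (hwu : w ≠ u) :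
    Γ (T.parent w) = ((Γ u).1 + ε * relIdx T u (T.parent w),
      (Γ u).2 - ε * ((depthT T w : ℝ) - depthT T u - 1)) := by
  rw [h _ (hw.parent_right hwu.symm), depthT_parent (hw.ne_root hwu)]
  push_cast
  ring_nf

lemma mem_boxAt (hε : ε = 1 ∨ ε = -1) (h : SignedCanonicalOn T u ε Γ) {w : V}
    (hw : T.AncEq u w) : Γ w ∈ boxAt (2 * Fintype.card V) (Γ u) := by
  have habs : |ε| = 1 := by rcases hε with rfl | rfl <;> simp
  have hidx : (relIdx T u w : ℝ) < Fintype.card V := by exact_mod_cast relIdx_lt_card u w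
  have hdep : (depthT T w : ℝ) < Fintype.card V := by exact_mod_cast depthT_lt_card w
  have hdep' : (depthT T u : ℝ) ≤ depthT T w := by exact_mod_cast hw.depthT_le
  rw [h w hw]
  constructor
  · rw [add_sub_cancel_left, abs_mul, habs, one_mul, Nat.abs_cast]
    linarith
  · rw [sub_sub_cancel_left, abs_neg, abs_mul, habs, one_mul, abs_of_nonneg (by linarith)]
    linarith [(depthT T u).cast_nonneg (α := ℝ)]

lemma injOn (hε : ε ≠ 0) (h : SignedCanonicalOn T u ε Γ) :
    Set.InjOn Γ {w | T.AncEq u w} := by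
  intro x hx y hy hxy
  rw [h x hx, h y hy, Prod.mk.injEq, add_right_inj, mul_right_inj' hε, Nat.cast_inj] at hxy
  exact relIdx_injOn u hx hy hxy.1

lemma edgesMeetAtEnds (hε : ε ≠ 0) (h : SignedCanonicalOn T u ε Γ) {x y : V}
    (hx : T.AncEq u x) (hxu : x ≠ u) (hy : T.AncEq u y) (hyu : y ≠ u) (hxy : x ≠ y) :
    EdgesMeetAtEnds T Γ x y := by
  wlog hd : depthT T x ≤ depthT T y generalizing x y
  · exact (this hy hyu hx hxu hxy.symm (le_of_not_ge hd)).symm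
  have hpx := hx.parent_right hxu.symm
  have hpy := hy.parent_right hyu.symm
  rintro z ⟨hzx, hzy⟩
  rw [segment_eq_image] at hzx hzy
  obtain ⟨t, ⟨ht0, ht1⟩, rfl⟩ := hzx
  obtain ⟨s, ⟨hs0, hs1⟩, hzs⟩ := hzy
  have h₁ := congrArg Prod.fst hzs
  have h₂ := congrArg Prod.snd hzs
  simp only [Prod.fst_add, Prod.snd_add, Prod.smul_fst, Prod.smul_snd, smul_eq_mul,
    h x hx, h y hy, h.parent_eq hx hxu, h.parent_eq hy hyu] at h₁ h₂
  have hY : (depthT T y : ℝ) - s = depthT T x - t :=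
    mul_left_cancel₀ hε (by linear_combination -h₂)
  have hX : (1 - s) * (relIdx T u y : ℝ) + s * relIdx T u (T.parent y) =
      (1 - t) * relIdx T u x + t * relIdx T u (T.parent x) :=
    mul_left_cancel₀ hε (by linear_combination h₁)
  rcases hd.lt_or_eq with hlt | heq
  · have hd' : (depthT T x : ℝ) + 1 ≤ depthT T y := by exact_mod_cast hlt
    obtain rfl : t = 0 := by linarith
    obtain rfl : s = 1 := by linarith
    simp only [sub_zero, one_smul, zero_smul, add_zero, sub_self] at hzs ⊢
    have hxpy : T.parent y = x := h.injOn hε hpy hx (by simpa using hzs)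
    exact ⟨x, ⟨Or.inl rfl, Or.inr hxpy.symm⟩, rfl⟩
  obtain rfl : t = s := by
    have : (depthT T x : ℝ) = depthT T y := by exact_mod_cast heq
    linarith
  by_cases hp : T.parent x = T.parent y
  · have hrel : (relIdx T u x : ℝ) ≠ relIdx T u y :=
      Nat.cast_injective.ne fun h' => hxy (relIdx_injOn u hx hy h')
    obtain rfl : t = 1 := by
      rw [hp] at hX
      have : (1 - t) * ((relIdx T u y : ℝ) - relIdx T u x) = 0 := by linear_combination hX
      rcases mul_eq_zero.mp this with h' | h'
      · linarith
      · exact absurd (sub_eq_zero.mp h').symm hrel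
    exact ⟨T.parent x, ⟨Or.inr rfl, Or.inr hp⟩, by simp⟩
  -- distinct parents at equal depth: the two edges are strictly ordered left to right
  exfalso
  have hdp : depthT T (T.parent x) = depthT T (T.parent y) := by
    have := depthT_parent (hx.ne_root hxu)
    have := depthT_parent (hy.ne_root hyu)
    omega
  have key : ∀ {a b : V}, T.AncEq u a → T.AncEq u (T.parent a) → T.parent a ≠ T.parent b →
      depthT T (T.parent a) = depthT T (T.parent b) → preLT T (T.parent a) (T.parent b) →
      (1 - t) * (relIdx T u a : ℝ) + t * relIdx T u (T.parent a) <
        (1 - t) * relIdx T u b + t * relIdx T u (T.parent b) := by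
    intro a b ha hpa hne hd hab
    have hnot : ¬ T.AncEq (T.parent a) (T.parent b) := fun h' => (h'.depthT_lt hne).ne hd
    have h₁ : (relIdx T u a : ℝ) < relIdx T u b := by
      exact_mod_cast relIdx_lt_relIdx ha
        ((hab.ancEq_trans (parent_ancEq a) hnot).trans_ancEq (parent_ancEq b))
    have h₂ : (relIdx T u (T.parent a) : ℝ) < relIdx T u (T.parent b) := by
      exact_mod_cast relIdx_lt_relIdx hpa hab
    nlinarith [mul_nonneg ht0 (sub_pos.2 h₂).le, mul_nonneg (sub_nonneg.2 ht1) (sub_pos.2 h₁).le]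
  rcases preLT_or_preLT hp with ho | ho
  · exact (key hx hpx hp hdp ho).ne' hX
  · exact (key hy hpy (Ne.symm hp) hdp.symm ho).ne hX

lemma edgesMeetAtEnds_root (hε : ε = 1 ∨ ε = -1) (h : SignedCanonicalOn T u ε Γ)
    (hside : OnParentSide ε (Γ u) (Γ (T.parent u))) {w : V} (hw : T.AncEq u w)
    (hwu : w ≠ u) : EdgesMeetAtEnds T Γ u w := by
  have hεε : ε * ε = 1 := by rcases hε with rfl | rfl <;> norm_num
  have hside' : 0 ≤ ε * ((Γ (T.parent u)).2 - (Γ u).2) := by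
    rcases hε with rfl | rfl
    · linarith [hside.1 rfl]
    · linarith [hside.2 rfl]
  have hpw := hw.parent_right hwu.symm
  have hd : (depthT T u : ℝ) + 1 ≤ depthT T w := by exact_mod_cast hw.depthT_lt hwu.symm
  rintro z ⟨hzu, hzw⟩
  rw [segment_eq_image] at hzu hzw
  obtain ⟨t, ⟨ht0, ht1⟩, rfl⟩ := hzu
  obtain ⟨s, ⟨hs0, hs1⟩, hzs⟩ := hzw
  have h₂ := congrArg Prod.snd hzs
  simp only [Prod.snd_add, Prod.smul_snd, smul_eq_mul, h w hw, h.parent_eq hw hwu] at h₂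
  have hkey : t * (ε * ((Γ (T.parent u)).2 - (Γ u).2)) = s - (depthT T w - depthT T u) := by
    linear_combination (-ε) * h₂ + (s - depthT T w + depthT T u) * hεε
  have hts := mul_nonneg ht0 hside'
  obtain rfl : s = 1 := by linarith
  have hdw : depthT T w = depthT T u + 1 := by
    have : (depthT T w : ℝ) = depthT T u + 1 := by linarith
    exact_mod_cast this
  have hpwu : u = T.parent w := by
    by_contra hne
    have := hpw.depthT_lt hne
    have := depthT_parent (hw.ne_root hwu)
    omega
  simp only [sub_self, zero_smul, one_smul, zero_add] at hzs
  exact ⟨u, ⟨Or.inl rfl, Or.inr hpwu⟩, (congrArg Γ hpwu).trans hzs⟩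

lemma onParentSide (hε : ε = 1 ∨ ε = -1) (h : SignedCanonicalOn T u ε Γ) {w : V}
    (hw : T.AncEq u w) (hwu : w ≠ u) : OnParentSide ε (Γ w) (Γ (T.parent w)) := by
  rw [h w hw, h.parent_eq hw hwu]
  constructor <;> rintro rfl <;> simp only [one_mul, neg_mul, sub_neg_eq_add] <;> linarith

lemma canonicalAt (hε : ε = 1 ∨ ε = -1) (h : SignedCanonicalOn T u ε Γ)
    (hu : IsGridPoint (Γ u)) (hside : u ≠ T.root → OnParentSide ε (Γ u) (Γ (T.parent u))) :
    CanonicalAt T Γ u := by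
  rcases hε with rfl | rfl
  · have hup := h.upCanonicalOn hu
    exact ⟨Or.inl hup, fun hr => ⟨fun _ => hup, fun hlt => absurd ((hside hr).1 rfl) hlt.not_ge⟩⟩
  · have hdown := h.downCanonicalOn hu
    exact ⟨Or.inr hdown, fun hr => ⟨fun hle => absurd ((hside hr).2 rfl) hle.not_gt,
      fun _ => hdown⟩⟩

open Complex in
lemma orderPreservingAt (hε : ε = 1 ∨ ε = -1) (h : SignedCanonicalOn T v ε Γ)
    (hside : v ≠ T.root → OnParentSide ε (Γ v) (Γ (T.parent v))) :
    OrderPreservingAt T Γ v := by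
  have hchild : ∀ c, T.IsChild c v → T.AncEq v c := fun c hc => hc.2 ▸ parent_ancEq c
  have hangle : ∀ c, T.IsChild c v →
      dirAngle (Γ v) (Γ c) = arg (ε * ((relIdx T v c : ℝ) - I)) := by
    intro c hc
    rw [h c (hchild c hc), depthT_parent hc.1, hc.2, ← dirAngle_add_mul]
    congr 2
    push_cast
    ring
  have hpos : ∀ c, T.IsChild c v → (0 : ℝ) < relIdx T v c := by
    intro c hc
    have hcv : v ≠ c := fun hvc => not_ancEq_parent hc.1 (by rw [hc.2, hvc]; exact AncEq.refl c)
    exact_mod_cast relIdx_self (T := T) v ▸ relIdx_lt_relIdx (AncEq.refl v)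
      (preLT_of_ancEq (hchild c hc) hcv)
  have hmono : ∀ c₁ c₂, T.IsChild c₁ v → T.IsChild c₂ v → T.rank c₁ < T.rank c₂ →
      arg ((relIdx T v c₁ : ℝ) - I) < arg ((relIdx T v c₂ : ℝ) - I) := by
    intro c₁ c₂ h₁ h₂ hr
    refine arg_sub_I_strictMonoOn (hpos c₁ h₁) (hpos c₂ h₂) ?_
    exact_mod_cast relIdx_lt_relIdx (hchild c₁ h₁)
      (preLT_of_sibling_ancEq h₁.1 h₂.1 (h₁.2.trans h₂.2.symm) hr (AncEq.refl _) (AncEq.refl _))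
  rcases hε with rfl | rfl
  · -- children point down-right, into the last quarter of the window `[0, 2π)`
    have hc : ∀ c, T.IsChild c v → angFrom Γ 0 v c = arg ((relIdx T v c : ℝ) - I) + 2 * π := by
      intro c hc
      rw [angFrom, hangle c hc, ofReal_one, one_mul]
      exact normAngle_eq_add_two_pi
        (by linarith [neg_pi_lt_arg (((relIdx T v c : ℝ) : ℂ) - I), pi_pos]) (arg_sub_I_neg _)
    refine ⟨0, fun c₁ c₂ h₁ h₂ hr => ?_, fun hv c hcv => ?_⟩
    · rw [hc c₁ h₁, hc c₂ h₂]
      linarith [hmono c₁ c₂ h₁ h₂ hr]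
    · have hup := dirAngle_nonneg ((hside hv).1 rfl)
      have := dirAngle_le_pi (Γ v) (Γ (T.parent v))
      rw [hc c hcv, angFrom, normAngle_eq_self hup (by linarith [pi_pos])]
      linarith [neg_pi_lt_arg (((relIdx T v c : ℝ) : ℂ) - I)]
  · -- children point up-left, into `(0, π)`, and the parent lies in `(-π, 0)`
    have hc : ∀ c, T.IsChild c v → angFrom Γ (-π) v c = arg ((relIdx T v c : ℝ) - I) + π := by
      intro c hc
      have him : (((relIdx T v c : ℝ) : ℂ) - I).im < 0 := by simp
      rw [angFrom, hangle c hc, ofReal_neg, ofReal_one, neg_one_mul,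
        arg_neg_eq_arg_add_pi_of_im_neg him]
      exact normAngle_eq_self (by linarith [neg_pi_lt_arg (((relIdx T v c : ℝ) : ℂ) - I), pi_pos])
        (by linarith [arg_sub_I_neg (relIdx T v c : ℝ), pi_pos])
    refine ⟨-π, fun c₁ c₂ h₁ h₂ hr => ?_, fun hv c hcv => ?_⟩
    · rw [hc c₁ h₁, hc c₂ h₂]
      linarith [hmono c₁ c₂ h₁ h₂ hr]
    · have hdown := dirAngle_neg ((hside hv).2 rfl)
      have := neg_pi_lt_dirAngle (Γ v) (Γ (T.parent v))
      rw [hc c hcv, angFrom, normAngle_eq_self this.le (by linarith [pi_pos])]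
      linarith [neg_pi_lt_arg (((relIdx T v c : ℝ) : ℂ) - I)]

end SignedCanonicalOn

/-- `Δi` arises from `Δprev` by redrawing `T_vi` upward (`ε = 1`) or downward (`ε = -1`)
canonically around the fixed node `vi`, on the side of `vi` away from its parent. -/
structure IsSignedRedraw (T : OTree V) (vi : V) (ε : ℝ) (Δprev Δi : V → ℝ × ℝ) : Prop where
  sign : ε = 1 ∨ ε = -1
  fix : ∀ w, (w = vi ∨ ¬ T.AncEq vi w) → Δi w = Δprev w
  canonical : SignedCanonicalOn T vi ε Δi
  parentSide : vi ≠ T.root → OnParentSide ε (Δprev vi) (Δprev (T.parent vi))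

lemma exists_isSignedRedraw {T : OTree V} {vi : V} {Δprev Δi : V → ℝ × ℝ}
    (hfix : ∀ w, (w = vi ∨ ¬ T.AncEq vi w) → Δi w = Δprev w)
    (hupc : (vi = T.root ∨ (Δprev vi).2 ≤ (Δprev (T.parent vi)).2) → UpCanonicalOn T vi Δi)
    (hdownc : (vi ≠ T.root ∧ (Δprev (T.parent vi)).2 < (Δprev vi).2) →
      DownCanonicalOn T vi Δi) :
    ∃ ε, IsSignedRedraw T vi ε Δprev Δi := by
  by_cases hup : vi = T.root ∨ (Δprev vi).2 ≤ (Δprev (T.parent vi)).2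
  · exact ⟨1, Or.inl rfl, hfix, (hupc hup).signedCanonicalOn,
      fun hr => ⟨fun _ => hup.resolve_left hr, by norm_num⟩⟩
  · obtain ⟨hr, hlt⟩ := not_or.mp hup
    exact ⟨-1, Or.inr rfl, hfix, (hdownc ⟨hr, not_le.mp hlt⟩).signedCanonicalOn,
      fun _ => ⟨by norm_num, fun _ => not_le.mp hlt⟩⟩

namespace IsSignedRedraw

variable {T : OTree V} {vi : V} {ε ℓ₀ : ℝ} {Δprev Δi : V → ℝ × ℝ} {visited : V → Prop}

lemma fix_parent (hR : IsSignedRedraw T vi ε Δprev Δi) {w : V}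
    (hw : ¬ (T.AncEq vi w ∧ w ≠ vi)) :
    Δi w = Δprev w ∧ Δi (T.parent w) = Δprev (T.parent w) := by
  rw [not_and_or, not_ne_iff] at hw
  refine ⟨hR.fix w hw.symm, hR.fix _ ?_⟩
  rcases hw with hw | rfl
  · exact Or.inr fun h => hw (h.trans (parent_ancEq w))
  · by_cases hr : w = T.root
    · exact Or.inl (hr ▸ T.parent_root)
    · exact Or.inr (not_ancEq_parent hr)

lemma fix_of_not_visited (hR : IsSignedRedraw T vi ε Δprev Δi)
    (hclosed : ∀ v c, visited v → T.IsChild c v → visited c)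
    (hchildren : ∀ c, T.IsChild c vi → visited c) {v : V} (hv : ¬ visited v) :
    Δi v = Δprev v := by
  refine hR.fix v ?_
  by_cases hvvi : v = vi
  · exact Or.inl hvvi
  · exact Or.inr fun h => hv (visited_of_ancEq_of_ne hclosed hchildren h hvvi)

lemma onParentSide (hR : IsSignedRedraw T vi ε Δprev Δi) (hr : vi ≠ T.root) :
    OnParentSide ε (Δi vi) (Δi (T.parent vi)) := by
  obtain ⟨h, hp⟩ := hR.fix_parent (w := vi) (by simp)
  rw [h, hp]
  exact hR.parentSide hr

lemma mem_boxAt (hR : IsSignedRedraw T vi ε Δprev Δi) (hℓ₀ : 0 ≤ ℓ₀) {w : V}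
    (hw : T.AncEq vi w) : Δi w ∈ boxAt (ℓ₀ + 4 * Fintype.card V) (Δprev vi) := by
  rw [← hR.fix vi (Or.inl rfl)]
  exact boxAt_mono (by linarith [(Fintype.card V).cast_nonneg (α := ℝ)]) _
    (hR.canonical.mem_boxAt hR.sign hw)

lemma segment_subset_boxAt (hR : IsSignedRedraw T vi ε Δprev Δi) (hℓ₀ : 0 ≤ ℓ₀) {w : V}
    (hw : T.AncEq vi w) (hwvi : w ≠ vi) :
    segment ℝ (Δi w) (Δi (T.parent w)) ⊆ boxAt (ℓ₀ + 4 * Fintype.card V) (Δprev vi) :=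
  (convex_boxAt _ _).segment_subset (hR.mem_boxAt hℓ₀ hw)
    (hR.mem_boxAt hℓ₀ (hw.parent_right hwvi.symm))

lemma injective (hR : IsSignedRedraw T vi ε Δprev Δi) (hℓ₀ : 0 ≤ ℓ₀)
    (hinj : Function.Injective Δprev)
    (hclear : ∀ w, w ≠ vi → Δprev w ∉ boxAt (ℓ₀ + 4 * Fintype.card V) (Δprev vi)) :
    Function.Injective Δi := by
  have hε : ε ≠ 0 := by rcases hR.sign with rfl | rfl <;> norm_num
  have hmoved : ∀ x y, T.AncEq vi x → ¬ T.AncEq vi y → Δi x ≠ Δi y := by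
    intro x y hx hy hxy
    refine hclear y (fun h => hy (by rw [h]; exact AncEq.refl vi)) ?_
    rw [← hR.fix y (Or.inr hy), ← hxy]
    exact hR.mem_boxAt hℓ₀ hx
  intro x y hxy
  by_cases hx : T.AncEq vi x <;> by_cases hy : T.AncEq vi y
  · exact hR.canonical.injOn hε hx hy hxy
  · exact absurd hxy (hmoved x y hx hy)
  · exact absurd hxy.symm (hmoved y x hy hx)
  · rw [hR.fix x (Or.inr hx), hR.fix y (Or.inr hy)] at hxy
    exact hinj hxy

lemma edgesMeetAtEnds_of_moved (hR : IsSignedRedraw T vi ε Δprev Δi) (hℓ₀ : 0 ≤ ℓ₀)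
    (hclear : ∀ w, w ≠ T.root → (segment ℝ (Δprev w) (Δprev (T.parent w)) ∩
      boxAt (ℓ₀ + 4 * Fintype.card V) (Δprev vi)).Nonempty → T.parent w = vi ∨ w = vi)
    {u v : V} (hu : T.AncEq vi u) (huvi : u ≠ vi) (hv : v ≠ T.root) (huv : u ≠ v) :
    EdgesMeetAtEnds T Δi u v := by
  have hε : ε ≠ 0 := by rcases hR.sign with rfl | rfl <;> norm_num
  by_cases hvm : T.AncEq vi v ∧ v ≠ vi
  · exact hR.canonical.edgesMeetAtEnds hε hu huvi hvm.1 hvm.2 huv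
  by_cases hvvi : v = vi
  · subst hvvi
    exact (hR.canonical.edgesMeetAtEnds_root hR.sign (hR.onParentSide hv) hu huvi).symm
  -- an old edge away from `vi` cannot reach the box of `vi`, where `T_vi` is drawn
  have hvout : ¬ T.AncEq vi v := fun h => hvm ⟨h, hvvi⟩
  obtain ⟨hfv, hfpv⟩ := hR.fix_parent hvm
  rintro z ⟨hzu, hzv⟩
  rw [hfv, hfpv] at hzv
  rcases hclear v hv ⟨z, hzv, hR.segment_subset_boxAt hℓ₀ hu huvi hzu⟩ with h | h
  · exact absurd (h ▸ parent_ancEq v) hvout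
  · exact absurd h hvvi

lemma isPlanarD (hR : IsSignedRedraw T vi ε Δprev Δi) (hℓ₀ : 0 ≤ ℓ₀) (hvi : ¬ visited vi)
    (hpl : IsPlanarD T Δprev) (hD : UnvisitedBoxesClear T visited ℓ₀ Δprev) :
    IsPlanarD T Δi := by
  have hclear := hD vi hvi
  refine ⟨hR.injective hℓ₀ hpl.1 hclear.1, fun u v hu hv huv => ?_⟩
  change EdgesMeetAtEnds T Δi u v
  by_cases hum : T.AncEq vi u ∧ u ≠ vi
  · exact hR.edgesMeetAtEnds_of_moved hℓ₀ hclear.2 hum.1 hum.2 hv huv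
  by_cases hvm : T.AncEq vi v ∧ v ≠ vi
  · exact (hR.edgesMeetAtEnds_of_moved hℓ₀ hclear.2 hvm.1 hvm.2 hu huv.symm).symm
  obtain ⟨hfu, hfpu⟩ := hR.fix_parent hum
  obtain ⟨hfv, hfpv⟩ := hR.fix_parent hvm
  exact EdgesMeetAtEnds.congr (hpl.2 u v hu hv huv) hfu hfpu hfv hfpv

lemma isGridD (hR : IsSignedRedraw T vi ε Δprev Δi) (hgrid : IsGridD Δprev) : IsGridD Δi := by
  intro w
  by_cases hw : T.AncEq vi w
  · exact hR.canonical.isGridPoint hR.sign (hR.fix vi (Or.inl rfl) ▸ hgrid vi) hw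
  · exact hR.fix w (Or.inr hw) ▸ hgrid w

lemma isOrderPreservingD (hR : IsSignedRedraw T vi ε Δprev Δi)
    (hop : IsOrderPreservingD T Δprev) : IsOrderPreservingD T Δi := by
  intro v
  change OrderPreservingAt T Δi v
  by_cases hv : T.AncEq vi v
  · refine (hR.canonical.mono hv).orderPreservingAt hR.sign fun hr => ?_
    by_cases hvvi : v = vi
    · exact hvvi ▸ hR.onParentSide (hvvi ▸ hr)
    · exact hR.canonical.onParentSide hR.sign hv hvvi
  obtain ⟨hfv, hfpv⟩ := hR.fix_parent (w := v) fun h => hv h.1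
  refine OrderPreservingAt.congr (hop v) hfv hfpv fun c hc => (hR.fix_parent ?_).1
  exact fun h => hv (hc.2 ▸ h.1.parent_right h.2.symm)

lemma canonicalSubtrees (hR : IsSignedRedraw T vi ε Δprev Δi)
    (hclosed : ∀ v c, visited v → T.IsChild c v → visited c) (hvi : ¬ visited vi)
    (hgrid : IsGridD Δprev) (hA : CanonicalSubtrees T visited Δprev) :
    CanonicalSubtrees T (fun w => visited w ∨ w = vi) Δi := by
  intro u hu
  by_cases hvu : T.AncEq vi u
  · refine (hR.canonical.mono hvu).canonicalAt hR.sign (hR.isGridD hgrid u) fun hr => ?_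
    by_cases huvi : u = vi
    · exact huvi ▸ hR.onParentSide (huvi ▸ hr)
    · exact hR.canonical.onParentSide hR.sign hvu huvi
  have hu : visited u := hu.resolve_right fun h => hvu (h ▸ AncEq.refl u)
  -- `T_u` does not contain `vi`, hence was not redrawn
  have hsub : ∀ w, T.AncEq u w → Δi w = Δprev w := by
    refine fun w huw => hR.fix w (Or.inr fun hvw => ?_)
    rcases hvw.total huw with h | h
    · exact hvu h
    · exact hvi (visited_of_ancEq hclosed h hu)
  exact (hA u hu).congr hsub (hR.fix_parent fun h => hvu h.1).2

lemma sectorCondition (hR : IsSignedRedraw T vi ε Δprev Δi) (hℓ₀ : 0 ≤ ℓ₀)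
    (hclosed : ∀ v c, visited v → T.IsChild c v → visited c) (hvi : ¬ visited vi)
    (hchildren : ∀ c, T.IsChild c vi → visited c) (hB : SectorCondition T visited ℓ₀ Δprev) :
    SectorCondition T (fun w => visited w ∨ w = vi) ℓ₀ Δi := by
  obtain ⟨S, hS, hdisj, hmeet⟩ := hB
  refine ⟨S, fun u hu hpu => ?_, fun u u' hu hu' hpu => hdisj u u' hu hu' (hpu ∘ Or.inl),
    fun v hv u hu hpu hne => ?_⟩
  · have hpv : ¬ visited (T.parent u) := hpu ∘ Or.inl
    have hpvi : T.parent u ≠ vi := hpu ∘ Or.inr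
    have hum : ¬ (T.AncEq vi u ∧ u ≠ vi) := fun h =>
      hpv (visited_of_ancEq_of_ne hclosed hchildren (h.1.parent_right h.2.symm) hpvi)
    have hmeetvi : ∀ p ∈ S u, p ∈ boxAt (ℓ₀ + 4 * Fintype.card V) (Δprev vi) → u = vi :=
      fun p hp hpb => (hmeet vi hvi u hu hpv ⟨p, hp, hpb⟩).resolve_left hpvi
    obtain ⟨hsec, hbox, hnodes, hedges, hcu⟩ := hS u hu hpv
    obtain ⟨hfu, hfpu⟩ := hR.fix_parent hum
    rw [hfu, hfpu]
    refine ⟨hsec, hbox, fun w hw => ?_, fun w hw huw z hz => ?_, hcu⟩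
    · by_cases hvw : T.AncEq vi w
      · exact Or.inr (hmeetvi _ hw (hR.mem_boxAt hℓ₀ hvw) ▸ hvw)
      · exact hnodes w (hR.fix w (Or.inr hvw) ▸ hw)
    · by_cases hwm : T.AncEq vi w ∧ w ≠ vi
      · exact absurd (hmeetvi z hz.2 (hR.segment_subset_boxAt hℓ₀ hwm.1 hwm.2 hz.1) ▸ hwm.1) huw
      · obtain ⟨hfw, hfpw⟩ := hR.fix_parent hwm
        rw [hfw, hfpw] at hz
        exact hedges w hw huw hz
  · rw [hR.fix_of_not_visited hclosed hchildren (hv ∘ Or.inl)] at hne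
    exact hmeet v (hv ∘ Or.inl) u hu (hpu ∘ Or.inl) hne

lemma unvisitedBoxesDisjoint (hR : IsSignedRedraw T vi ε Δprev Δi)
    (hclosed : ∀ v c, visited v → T.IsChild c v → visited c)
    (hchildren : ∀ c, T.IsChild c vi → visited c) (hC : UnvisitedBoxesDisjoint visited ℓ₀ Δprev) :
    UnvisitedBoxesDisjoint (fun w => visited w ∨ w = vi) ℓ₀ Δi := by
  intro v w hv hw hne
  rw [hR.fix_of_not_visited hclosed hchildren (hv ∘ Or.inl),
    hR.fix_of_not_visited hclosed hchildren (hw ∘ Or.inl)]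
  exact hC v w (hv ∘ Or.inl) (hw ∘ Or.inl) hne

lemma unvisitedBoxesClear (hR : IsSignedRedraw T vi ε Δprev Δi) (hℓ₀ : 0 ≤ ℓ₀)
    (hclosed : ∀ v c, visited v → T.IsChild c v → visited c) (hvi : ¬ visited vi)
    (hchildren : ∀ c, T.IsChild c vi → visited c) (hC : UnvisitedBoxesDisjoint visited ℓ₀ Δprev)
    (hD : UnvisitedBoxesClear T visited ℓ₀ Δprev) :
    UnvisitedBoxesClear T (fun w => visited w ∨ w = vi) ℓ₀ Δi := by
  intro v hv
  rw [hR.fix_of_not_visited hclosed hchildren (hv ∘ Or.inl)]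
  -- whatever was redrawn lies in the box of `vi`, which is disjoint from the box of `v`
  have hout : ∀ p ∈ boxAt (ℓ₀ + 4 * Fintype.card V) (Δprev vi),
      p ∉ boxAt (ℓ₀ + 4 * Fintype.card V) (Δprev v) := fun p hp hpv =>
    (hC vi v hvi (hv ∘ Or.inl) fun h => hv (Or.inr h.symm)).subset ⟨hp, hpv⟩
  refine ⟨fun w hwv => ?_, fun w hw ⟨z, hz, hzv⟩ => ?_⟩
  · by_cases hvw : T.AncEq vi w
    · exact hout _ (hR.mem_boxAt hℓ₀ hvw)
    · exact hR.fix w (Or.inr hvw) ▸ (hD v (hv ∘ Or.inl)).1 w hwv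
  · by_cases hwm : T.AncEq vi w ∧ w ≠ vi
    · exact absurd hzv (hout z (hR.segment_subset_boxAt hℓ₀ hwm.1 hwm.2 hz))
    · obtain ⟨hfw, hfpw⟩ := hR.fix_parent hwm
      rw [hfw, hfpw] at hz
      exact (hD v (hv ∘ Or.inl)).2 w hw ⟨z, hz, hzv⟩

end IsSignedRedraw

theorem redraw_subtree_partially_canonical_general (T : OTree V) (Γ₀ : V → ℝ × ℝ) (ℓ₀ : ℝ)
    (hℓ₀ : ℓ₀ = 150 * (max (gW Γ₀) (gH Γ₀)) ^ 2 * (Fintype.card V : ℝ))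
    (visited : V → Prop)
    (hclosed : ∀ v c, visited v → T.IsChild c v → visited c)
    (vi : V) (hvi₂ : ¬ visited vi)
    (hvi₃ : ∀ c, T.IsChild c vi → visited c)
    (Δprev Δi : V → ℝ × ℝ)
    (hprev : PartiallyCanonical T visited ℓ₀ Δprev)
    (hfix : ∀ w, (w = vi ∨ ¬ T.AncEq vi w) → Δi w = Δprev w)
    (hupc : (vi = T.root ∨ (Δprev vi).2 ≤ (Δprev (T.parent vi)).2) →
      UpCanonicalOn T vi Δi)
    (hdownc : (vi ≠ T.root ∧ (Δprev (T.parent vi)).2 < (Δprev vi).2) →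
      DownCanonicalOn T vi Δi) :
    PartiallyCanonical T (fun w => visited w ∨ w = vi) ℓ₀ Δi := by
  have hℓ₀' : 0 ≤ ℓ₀ := hℓ₀ ▸ by positivity
  obtain ⟨ε, hR⟩ := exists_isSignedRedraw hfix hupc hdownc
  rw [partiallyCanonical_iff] at hprev ⊢
  obtain ⟨hop, hpl, hgrid, hA, hB, hC, hD⟩ := hprev
  exact ⟨hR.isOrderPreservingD hop, hR.isPlanarD hℓ₀' hvi₂ hpl hD, hR.isGridD hgrid,
    hR.canonicalSubtrees hclosed hvi₂ hgrid hA, hR.sectorCondition hℓ₀' hclosed hvi₂ hvi₃ hB,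
    hR.unvisitedBoxesDisjoint hclosed hvi₃ hC, hR.unvisitedBoxesClear hℓ₀' hclosed hvi₂ hvi₃ hC hD⟩

/-- **Lemma 7.** Let `Δprev` be a partially-canonical drawing of
`T[i-1]` (labeling `visited`), let `vi` be the `i`-th internal node labeled visited in
the bottom-up visit of `T` (an unvisited internal node all of whose children are
visited), and let `Δi` be obtained from `Δprev` by redrawing the subtree `T_{vi}` —
keeping `vi` and every node outside `T_{vi}` fixed — upward canonically if `vi` is the
root or does not lie above its parent, and downward canonically otherwise. Then `Δi`
is a partially-canonical drawing of `T[i]` (labeling `visited ∪ {vi}`). -/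
theorem redraw_subtree_partially_canonical (T : OTree V) (Γ₀ : V → ℝ × ℝ) (ℓ₀ : ℝ)
    (hℓ₀ : ℓ₀ = 150 * (max (gW Γ₀) (gH Γ₀)) ^ 2 * (Fintype.card V : ℝ))
    (visited : V → Prop)
    (hleaf : ∀ v, T.IsLeaf v → visited v)
    (hclosed : ∀ v c, visited v → T.IsChild c v → visited c)
    (vi : V) (hvi₁ : ¬ T.IsLeaf vi) (hvi₂ : ¬ visited vi)
    (hvi₃ : ∀ c, T.IsChild c vi → visited c)
    (Δprev Δi : V → ℝ × ℝ)
    (hprev : PartiallyCanonical T visited ℓ₀ Δprev)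
    (hfix : ∀ w, (w = vi ∨ ¬ T.AncEq vi w) → Δi w = Δprev w)
    (hupc : (vi = T.root ∨ (Δprev vi).2 ≤ (Δprev (T.parent vi)).2) →
      UpCanonicalOn T vi Δi)
    (hdownc : (vi ≠ T.root ∧ (Δprev (T.parent vi)).2 < (Δprev vi).2) →
      DownCanonicalOn T vi Δi) :
    PartiallyCanonical T (fun w => visited w ∨ w = vi) ℓ₀ Δi :=
  redraw_subtree_partially_canonical_general T Γ₀ ℓ₀ hℓ₀ visited hclosed vi hvi₂ hvi₃ Δprev Δi hprev
    hfix hupc hdownc
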